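/- Let X be an anisotropic smooth projective quadric. For every rational cycle α ∈ Ch^{≤D}(X̄²) (codimension at most D = dim X), the number of essential basis elements contained in the basis decomposition of α is even. -/
import Mathlib


open Finset

/-- The standard basis of the mod-2 Chow group of a split projective quadric of dimension `D`
(with `d = D/2`): `Sum.inl i` stands for the class `hⁱ` of a codimension-`i` linear section,
and `Sum.inr i` for the class `lᵢ` of an `i`-dimensional linear subspace. -/
abbrev chB (D : ℕ) : Type := Fin (D / 2 + 1) ⊕ Fin (D / 2 + 1)

/-- The mod-2 Chow group `Ch(X̄ʳ)` of the `r`-th power of a split quadric of dimension `D`,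
modeled as the `𝔽₂`-vector space with basis the external products of the `hⁱ`'s and `lᵢ`'s. -/
abbrev CHr (D r : ℕ) : Type := (Fin r → chB D) → ZMod 2

/-- The basis element `hⁱ` (reducing `i` modulo `D/2 + 1`; in all intended uses
`i ≤ D/2`). -/
def hB (D i : ℕ) : chB D := Sum.inl ⟨i % (D / 2 + 1), Nat.mod_lt _ (Nat.succ_pos _)⟩

/-- The basis element `lᵢ` (reducing `i` modulo `D/2 + 1`; in all intended uses
`i ≤ D/2`). -/
def lB (D i : ℕ) : chB D := Sum.inr ⟨i % (D / 2 + 1), Nat.mod_lt _ (Nat.succ_pos _)⟩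

/-- The dimension of a basis element: `dim hⁱ = D - i`, `dim lᵢ = i`. -/
def dimB (D : ℕ) : chB D → ℕ
  | Sum.inl i => D - (i : ℕ)
  | Sum.inr i => (i : ℕ)

/-- The basis cycle (external product of basis elements) determined by `b`. -/
def basisCyc {D r : ℕ} (b : Fin r → chB D) : CHr D r := fun c => if c = b then 1 else 0

/-- Structure constants of the multiplication of `Ch(X̄)`: `mulB D b₁ b₂ c` is the coefficient
of the basis element `c` in the product `b₁ · b₂`.  The defining relations are
`hⁱ·hʲ = hⁱ⁺ʲ` (`= 0` beyond `h^{D/2}`, as `h^{D/2+1} = 0` mod 2), `hⁱ·lⱼ = l_{j-i}`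
(`l` with negative index being `0`), and `l_{D/2}·l_{D/2} = (D+1)(D/2+1)·l₀`. -/
def mulB (D : ℕ) : chB D → chB D → chB D → ZMod 2
  | Sum.inl i, Sum.inl j => fun c =>
      if h : (i : ℕ) + (j : ℕ) ≤ D / 2 then
        (if c = Sum.inl ⟨(i : ℕ) + (j : ℕ), by omega⟩ then 1 else 0)
      else 0
  | Sum.inl i, Sum.inr j => fun c =>
      if (i : ℕ) ≤ (j : ℕ) then (if c = lB D ((j : ℕ) - (i : ℕ)) then 1 else 0) else 0
  | Sum.inr j, Sum.inl i => fun c =>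
      if (i : ℕ) ≤ (j : ℕ) then (if c = lB D ((j : ℕ) - (i : ℕ)) then 1 else 0) else 0
  | Sum.inr i, Sum.inr j => fun c =>
      if (i : ℕ) = D / 2 ∧ (j : ℕ) = D / 2 ∧ c = lB D 0 then
        ((D + 1) * (D / 2 + 1) : ZMod 2)
      else 0

/-- The multiplication of `Ch(X̄ʳ)`, extended bilinearly from the structure constants and
computed factorwise on external products. -/
def mulr {D r : ℕ} (x y : CHr D r) : CHr D r :=
  fun c => ∑ b₁ : Fin r → chB D, ∑ b₂ : Fin r → chB D,
    x b₁ * y b₂ * ∏ t, mulB D (b₁ t) (b₂ t) (c t)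

/-- The unit `h⁰ × ⋯ × h⁰ = [X̄ʳ]`. -/
def oneC (D r : ℕ) : CHr D r := basisCyc (fun _ => hB D 0)

/-- Powers with respect to `mulr`. -/
def powC {D r : ℕ} (x : CHr D r) : ℕ → CHr D r
  | 0 => oneC D r
  | k + 1 => mulr x (powC x k)

/-- Structure constants of the total (mod-2, topological) Steenrod operation on `Ch(X̄)`,
expanded through binomial coefficients:
`S(hⁱ) = Σ_k C(i,k)·h^{i+k}` and `S(lᵢ) = Σ_k C(D-i+1,k)·l_{i-k}`. -/
def StB (D : ℕ) : chB D → chB D → ZMod 2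
  | Sum.inl i, Sum.inl j =>
      if (i : ℕ) ≤ (j : ℕ) then ((i : ℕ).choose ((j : ℕ) - (i : ℕ)) : ZMod 2) else 0
  | Sum.inr i, Sum.inr j =>
      if (j : ℕ) ≤ (i : ℕ) then ((D - (i : ℕ) + 1).choose ((i : ℕ) - (j : ℕ)) : ZMod 2) else 0
  | _, _ => 0

/-- The total Steenrod operation on `Ch(X̄ʳ)`, acting factorwise on external products. -/
def Stot {D r : ℕ} (x : CHr D r) : CHr D r :=
  fun c => ∑ b : Fin r → chB D, x b * ∏ t, StB D (b t) (c t)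

/-- The homogeneous component of dimension `k`. -/
def component {D r : ℕ} (k : ℕ) (x : CHr D r) : CHr D r :=
  fun b => if (∑ t, dimB D (b t)) = k then x b else 0

/-- Push-forward along the first projection `Xʳ⁺¹ → Xʳ`. -/
def pushProj {D r : ℕ} (x : CHr D (r + 1)) : CHr D r := fun b => x (Fin.cons (lB D 0) b)

/-- Pull-back along the first projection `Xʳ⁺¹ → Xʳ`. -/
def pullProj {D r : ℕ} (x : CHr D r) : CHr D (r + 1) :=
  fun b => if b 0 = hB D 0 then x (fun t => b t.succ) else 0

/-- Pull-back along the first diagonal `Xʳ⁺¹ → Xʳ⁺²`: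
`δ*(β₀ × β₁ × β₂ × ⋯) = (β₀·β₁) × β₂ × ⋯`. -/
def pullDiag {D r : ℕ} (x : CHr D (r + 2)) : CHr D (r + 1) :=
  fun c => ∑ b : Fin (r + 2) → chB D,
    x b * mulB D (b 0) (b 1) (c 0) *
      (if ∀ t : Fin r, b t.succ.succ = c t.succ then 1 else 0)

/-- An abstract "rationality system" on the Chow groups of the powers of an **anisotropic**
projective quadric of dimension `D`: the collection, for each `r ≥ 1`, of the subgroups
`Ch̄(Xʳ) ⊆ Ch(X̄ʳ)` of rational cycles, together with the standing restrictions they satisfy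
(closure under addition, multiplication, homogeneous components, permutations of factors,
push-forwards and pull-backs along projections, pull-backs along diagonals, Steenrod
operations; rationality of the non-essential cycles; the Springer-Satz `l₀ ∉ Ch̄(X)`
expressing anisotropy; and Vishik's "size of binary correspondences" restriction). -/
structure AnisoChowSys (D : ℕ) : Type where
  R : (r : ℕ) → Set (CHr D r)
  zero_mem : ∀ r, (0 : CHr D r) ∈ R r
  add_mem : ∀ r, ∀ x ∈ R r, ∀ y ∈ R r, x + y ∈ R r
  mul_mem : ∀ r, ∀ x ∈ R r, ∀ y ∈ R r, mulr x y ∈ R r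
  nonessential_mem : ∀ (r : ℕ) (f : Fin r → ℕ), basisCyc (fun t => hB D (f t)) ∈ R r
  component_mem : ∀ r k, ∀ x ∈ R r, component k x ∈ R r
  perm_mem : ∀ (r : ℕ) (σ : Equiv.Perm (Fin r)), ∀ x ∈ R r, (fun b => x (b ∘ σ)) ∈ R r
  pushProj_mem : ∀ r, ∀ x ∈ R (r + 1), pushProj x ∈ R r
  pullProj_mem : ∀ r, ∀ x ∈ R r, pullProj x ∈ R (r + 1)
  pullDiag_mem : ∀ r, ∀ x ∈ R (r + 2), pullDiag x ∈ R (r + 1)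
  steenrod_mem : ∀ r, ∀ x ∈ R r, Stot x ∈ R r
  springer : basisCyc (fun _ : Fin 1 => lB D 0) ∉ R 1
  binary_size : ∀ i : ℕ, i ≤ D / 2 →
    basisCyc ![hB D 0, lB D i] + basisCyc ![lB D i, hB D 0] ∈ R 2 →
      ∃ p : ℕ, D - i + 1 = 2 ^ p

section Aux

variable {D : ℕ}

lemma zmod2_cases : ∀ a : ZMod 2, a = 0 ∨ a = 1 := by decide

lemma zmod2_ne_zero {a : ZMod 2} (h : a ≠ 0) : a = 1 := by
  rcases zmod2_cases a with h' | h'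
  · exact absurd h' h
  · exact h'

lemma zmod2_add_self : ∀ a : ZMod 2, a + a = 0 := by decide

lemma hB_val (i : ℕ) (h : i ≤ D / 2) : hB D i = Sum.inl ⟨i, Nat.lt_succ_of_le h⟩ := by
  simp [hB, Nat.mod_eq_of_lt (Nat.lt_succ_of_le h)]

lemma lB_val (i : ℕ) (h : i ≤ D / 2) : lB D i = Sum.inr ⟨i, Nat.lt_succ_of_le h⟩ := by
  simp [lB, Nat.mod_eq_of_lt (Nat.lt_succ_of_le h)]

lemma fun1_eq (b : Fin 1 → chB D) : b = fun _ => b 0 :=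
  funext fun t => congrArg b (Subsingleton.elim t 0)

lemma sum_fun1 (F : (Fin 1 → chB D) → ZMod 2) :
    ∑ b : Fin 1 → chB D, F b = ∑ a : chB D, F (fun _ => a) := by
  refine Fintype.sum_equiv (Equiv.funUnique (Fin 1) (chB D)) _ _ fun b => ?_
  exact congrArg F (fun1_eq b)

lemma mulr_basis_right {r : ℕ} (x : CHr D r) (g : Fin r → chB D) (c : Fin r → chB D) :
    mulr x (basisCyc g) c = ∑ b₁ : Fin r → chB D, x b₁ * ∏ t, mulB D (b₁ t) (g t) (c t) := by
  unfold mulr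
  refine Finset.sum_congr rfl fun b₁ _ => ?_
  rw [Finset.sum_eq_single g]
  · simp [basisCyc]
  · intro b₂ _ hb₂
    simp [basisCyc, hb₂]
  · intro h
    exact absurd (Finset.mem_univ g) h

lemma coeff_l_eq_zero (S : AnisoChowSys D) {x : CHr D 1} (hx : x ∈ S.R 1)
    (k : ℕ) (hk : k ≤ D / 2) : x (fun _ => lB D k) = 0 := by
  by_contra hne
  have hx1 : x (fun _ => lB D k) = 1 := zmod2_ne_zero hne
  have hyR : component k x ∈ S.R 1 := S.component_mem 1 k x hx
  set z := mulr (component k x) (basisCyc (fun _ : Fin 1 => hB D k)) with hz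
  have hzR : z ∈ S.R 1 := S.mul_mem 1 _ hyR _ (S.nonessential_mem 1 (fun _ => k))
  have hzc : ∀ u : chB D, z (fun _ => u) =
      ∑ a : chB D, (if dimB D a = k then x (fun _ => a) else 0) * mulB D a (hB D k) u := by
    intro u
    rw [hz, mulr_basis_right, sum_fun1]
    refine Finset.sum_congr rfl fun a _ => ?_
    rw [Fin.prod_univ_one]
    simp only [component, Fin.sum_univ_one]
  -- (i) value at l₀ is 1
  have hi : z (fun _ => lB D 0) = 1 := by
    rw [hzc]
    rw [Finset.sum_eq_single (Sum.inr ⟨k, Nat.lt_succ_of_le hk⟩)]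
    · rw [hB_val k hk]
      have : dimB D (Sum.inr (⟨k, Nat.lt_succ_of_le hk⟩ : Fin (D / 2 + 1))) = k := rfl
      rw [if_pos this, ← lB_val k hk, hx1]
      simp [mulB, lB_val 0 (Nat.zero_le _), lB_val k hk]
    · intro a _ ha
      rcases a with i | j
      · rw [hB_val k hk]
        simp [mulB, lB_val 0 (Nat.zero_le _)]
      · have hj : (j : ℕ) ≠ k := by
          intro h
          exact ha (by simp [Fin.ext_iff, h])
        rw [if_neg (by simpa [dimB] using hj)]
        simp
    · intro h
      exact absurd (Finset.mem_univ _) h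
  -- (ii) value at other l's is 0
  have hii : ∀ j : Fin (D / 2 + 1), (j : ℕ) ≠ 0 → z (fun _ => Sum.inr j) = 0 := by
    intro j hj
    rw [hzc]
    refine Finset.sum_eq_zero fun a _ => ?_
    rcases a with i | j'
    · rw [hB_val k hk]
      simp [mulB]
    · by_cases hd : (j' : ℕ) = k
      · rw [hB_val k hk]
        have : mulB D (Sum.inr j') (Sum.inl (⟨k, Nat.lt_succ_of_le hk⟩ : Fin (D / 2 + 1)))
            (Sum.inr j) = 0 := by
          simp only [mulB]
          rw [hd]
          rw [if_pos le_rfl, Nat.sub_self, lB_val 0 (Nat.zero_le _)]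
          simp [Fin.ext_iff, hj]
        rw [this, mul_zero]
      · rw [if_neg (by simpa [dimB] using hd), zero_mul]
  -- (iii) value at hⁱ, i ≠ 0, is 0
  have hiii : ∀ i : Fin (D / 2 + 1), (i : ℕ) ≠ 0 → z (fun _ => Sum.inl i) = 0 := by
    intro i hi0
    rw [hzc]
    refine Finset.sum_eq_zero fun a _ => ?_
    rcases a with i' | j'
    · by_cases hd : dimB D (Sum.inl i') = k
      · have : mulB D (Sum.inl i') (hB D k) (Sum.inl i) = 0 := by
          rw [hB_val k hk]
          simp only [mulB]
          by_cases hle : (i' : ℕ) + k ≤ D / 2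
          · rw [dif_pos hle, if_neg]
            intro hcon
            have h1 : (i : ℕ) = (i' : ℕ) + k := by
              have := congrArg (fun c => match c with
                | Sum.inl a => (a : ℕ) | Sum.inr a => (a : ℕ)) hcon
              simpa using this
            have h2 : D - (i' : ℕ) = k := hd
            have h3 : (i' : ℕ) ≤ D / 2 := Nat.lt_succ_iff.mp i'.isLt
            omega
          · rw [dif_neg hle]
        rw [this, mul_zero]
      · rw [if_neg hd, zero_mul]
    · have : mulB D (Sum.inr j') (hB D k) (Sum.inl i) = 0 := by
        rw [hB_val k hk]
        simp only [mulB]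
        by_cases hle : k ≤ (j' : ℕ)
        · rw [if_pos hle, if_neg]
          simp [lB]
        · rw [if_neg hle]
      rw [this, mul_zero]
  -- the value at h⁰
  have key : ∀ c : Fin 1 → chB D,
      z c + (if c = (fun _ => hB D 0) then z (fun _ => hB D 0) else 0)
        = basisCyc (fun _ : Fin 1 => lB D 0) c := by
    intro c
    rw [fun1_eq c]
    rcases hc : c 0 with i | j
    · by_cases hi0 : (i : ℕ) = 0
      · have hieq : (fun _ : Fin 1 => Sum.inl i) = (fun _ : Fin 1 => hB D 0) := by
          rw [hB_val 0 (Nat.zero_le _)]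
          funext t
          congr 1
          exact Fin.ext hi0
        rw [hieq, if_pos rfl, basisCyc]
        rw [if_neg (by
          intro hcon
          have := congrFun hcon 0
          rw [hB_val 0 (Nat.zero_le _), lB_val 0 (Nat.zero_le _)] at this
          exact absurd this (by simp))]
        exact zmod2_add_self _
      · rw [hiii i hi0, if_neg (by
          intro hcon
          have := congrFun hcon 0
          rw [hB_val 0 (Nat.zero_le _)] at this
          simp [Fin.ext_iff, hi0] at this), basisCyc]
        rw [if_neg (by
          intro hcon
          have := congrFun hcon 0
          rw [lB_val 0 (Nat.zero_le _)] at this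
          exact absurd this (by simp))]
        simp
    · have hne' : (fun _ : Fin 1 => Sum.inr j) ≠ (fun _ : Fin 1 => hB D 0) := by
        intro hcon
        have := congrFun hcon 0
        rw [hB_val 0 (Nat.zero_le _)] at this
        exact absurd this (by simp)
      rw [if_neg hne', add_zero]
      by_cases hj0 : (j : ℕ) = 0
      · have hjeq : (fun _ : Fin 1 => Sum.inr j) = (fun _ : Fin 1 => lB D 0) := by
          rw [lB_val 0 (Nat.zero_le _)]
          funext t
          congr 1
          exact Fin.ext hj0
        rw [hjeq, hi, basisCyc, if_pos rfl]
      · rw [hii j hj0, basisCyc, if_neg (by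
          intro hcon
          have := congrFun hcon 0
          rw [lB_val 0 (Nat.zero_le _)] at this
          simp [Fin.ext_iff, hj0] at this)]
  rcases zmod2_cases (z (fun _ => hB D 0)) with h0 | h0
  · have : z = basisCyc (fun _ : Fin 1 => lB D 0) := by
      funext c
      have := key c
      by_cases hc : c = (fun _ : Fin 1 => hB D 0)
      · rw [if_pos hc, h0, add_zero] at this
        exact this
      · rwa [if_neg hc, add_zero] at this
    exact S.springer (this ▸ hzR)
  · have hmem : z + basisCyc (fun t : Fin 1 => hB D ((fun _ => 0) t)) ∈ S.R 1 :=
      S.add_mem 1 z hzR _ (S.nonessential_mem 1 (fun _ => 0))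
    have : z + basisCyc (fun t : Fin 1 => hB D ((fun _ => 0) t))
        = basisCyc (fun _ : Fin 1 => lB D 0) := by
      funext c
      have := key c
      show z c + basisCyc (fun _ : Fin 1 => hB D 0) c = _
      rw [basisCyc]
      by_cases hc : c = (fun _ : Fin 1 => hB D 0)
      · rw [if_pos hc]
        rwa [if_pos hc, h0] at this
      · rw [if_neg hc, add_zero]
        rwa [if_neg hc, add_zero] at this
    exact S.springer (this ▸ hmem)

lemma alpha_ld_ld (S : AnisoChowSys D) {α : CHr D 2} (hα : α ∈ S.R 2) :
    α (fun _ => lB D (D / 2)) = 0 := by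
  set w := pushProj (mulr α (basisCyc (fun t => hB D (![D / 2, 0] t)))) with hw
  have hwR : w ∈ S.R 1 :=
    S.pushProj_mem 1 _ (S.mul_mem 2 α hα _ (S.nonessential_mem 2 ![D / 2, 0]))
  have hwval : w (fun _ => lB D (D / 2)) = α (fun _ => lB D (D / 2)) := by
    rw [hw]
    show mulr α (basisCyc (fun t => hB D (![D / 2, 0] t)))
      (Fin.cons (lB D 0) (fun _ => lB D (D / 2))) = _
    rw [mulr_basis_right]
    rw [Finset.sum_eq_single (fun _ : Fin 2 => lB D (D / 2))]
    · rw [Fin.prod_univ_two]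
      have e0 : (Fin.cons (lB D 0) (fun _ : Fin 1 => lB D (D / 2)) : Fin 2 → chB D) 0
          = lB D 0 := rfl
      have e1 : (Fin.cons (lB D 0) (fun _ : Fin 1 => lB D (D / 2)) : Fin 2 → chB D) 1
          = lB D (D / 2) := rfl
      rw [e0, e1]
      have m0 : mulB D (lB D (D / 2)) (hB D (![D / 2, 0] 0)) (lB D 0) = 1 := by
        show mulB D (lB D (D / 2)) (hB D (D / 2)) (lB D 0) = 1
        rw [lB_val (D / 2) le_rfl, hB_val (D / 2) le_rfl]
        simp [mulB]
      have m1 : mulB D (lB D (D / 2)) (hB D (![D / 2, 0] 1)) (lB D (D / 2)) = 1 := by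
        show mulB D (lB D (D / 2)) (hB D 0) (lB D (D / 2)) = 1
        rw [lB_val (D / 2) le_rfl, hB_val 0 (Nat.zero_le _)]
        simp [mulB, lB_val (D / 2) (le_refl (D / 2))]
      rw [m0, m1, mul_one, mul_one]
    · intro b _ hb
      rcases h0 : b 0 with i | j
      · have : mulB D (b 0) (hB D (![D / 2, 0] 0)) ((Fin.cons (lB D 0)
            (fun _ : Fin 1 => lB D (D / 2)) : Fin 2 → chB D) 0) = 0 := by
          rw [h0]
          show mulB D (Sum.inl i) (hB D (D / 2)) (lB D 0) = 0
          rw [hB_val (D / 2) le_rfl, lB_val 0 (Nat.zero_le _)]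
          simp [mulB]
        rw [Fin.prod_univ_two, this, zero_mul, mul_zero]
      · by_cases hj : (j : ℕ) = D / 2
        · rcases h1 : b 1 with i' | j'
          · have : mulB D (b 1) (hB D (![D / 2, 0] 1)) ((Fin.cons (lB D 0)
                (fun _ : Fin 1 => lB D (D / 2)) : Fin 2 → chB D) 1) = 0 := by
              rw [h1]
              show mulB D (Sum.inl i') (hB D 0) (lB D (D / 2)) = 0
              rw [hB_val 0 (Nat.zero_le _), lB_val (D / 2) le_rfl]
              simp [mulB]
            rw [Fin.prod_univ_two, this, mul_zero, mul_zero]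
          · by_cases hj' : (j' : ℕ) = D / 2
            · exfalso
              apply hb
              have h0' : b 0 = lB D (D / 2) := by
                rw [h0, lB_val (D / 2) le_rfl]
                exact congrArg Sum.inr (Fin.ext hj)
              have h1' : b 1 = lB D (D / 2) := by
                rw [h1, lB_val (D / 2) le_rfl]
                exact congrArg Sum.inr (Fin.ext hj')
              funext t
              refine Fin.cases h0' (fun t' => ?_) t
              rw [Subsingleton.elim t' 0]
              exact h1'
            · have : mulB D (b 1) (hB D (![D / 2, 0] 1)) ((Fin.cons (lB D 0)
                  (fun _ : Fin 1 => lB D (D / 2)) : Fin 2 → chB D) 1) = 0 := by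
                rw [h1]
                show mulB D (Sum.inr j') (hB D 0) (lB D (D / 2)) = 0
                rw [hB_val 0 (Nat.zero_le _), lB_val (D / 2) le_rfl]
                simp only [mulB]
                rw [if_pos (Nat.zero_le _), if_neg]
                rw [Nat.sub_zero, lB_val (j' : ℕ) (Nat.lt_succ_iff.mp j'.isLt)]
                simp [Fin.ext_iff]
                omega
              rw [Fin.prod_univ_two, this, mul_zero, mul_zero]
        · have : mulB D (b 0) (hB D (![D / 2, 0] 0)) ((Fin.cons (lB D 0)
              (fun _ : Fin 1 => lB D (D / 2)) : Fin 2 → chB D) 0) = 0 := by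
            rw [h0]
            show mulB D (Sum.inr j) (hB D (D / 2)) (lB D 0) = 0
            rw [hB_val (D / 2) le_rfl, lB_val 0 (Nat.zero_le _)]
            simp only [mulB]
            by_cases hle : D / 2 ≤ (j : ℕ)
            · rw [if_pos hle, if_neg]
              rw [lB_val ((j : ℕ) - D / 2) (by omega)]
              simp [Fin.ext_iff]
              omega
            · rw [if_neg hle]
          rw [Fin.prod_univ_two, this, zero_mul, mul_zero]
    · intro h
      exact absurd (Finset.mem_univ _) h
  have h0 := coeff_l_eq_zero S hwR (D / 2) le_rfl
  rw [hwval] at h0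
  exact h0

end Aux

/-- For an anisotropic quadric `X` of dimension `D`, every rational cycle
`α ∈ Ch^{≤D}(X̄²)` contains an even number of essential basis elements in its
decomposition. -/
theorem even_number_of_essential_basis_elements (D : ℕ) (S : AnisoChowSys D)
    (α : CHr D 2) (hα : α ∈ S.R 2)
    (hcodim : ∀ b : Fin 2 → chB D, α b ≠ 0 → D ≤ dimB D (b 0) + dimB D (b 1)) :
    Even {b : Fin 2 → chB D | α b ≠ 0 ∧ ∃ (t : Fin 2) (j : Fin (D / 2 + 1)),
      b t = Sum.inr j}.ncard := by
  classical
  set E : Finset (Fin 2 → chB D) :=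
    Finset.univ.filter (fun b => α b ≠ 0 ∧ ∃ (t : Fin 2) (j : Fin (D / 2 + 1)),
      b t = Sum.inr j) with hE
  have hset : {b : Fin 2 → chB D | α b ≠ 0 ∧ ∃ (t : Fin 2) (j : Fin (D / 2 + 1)),
      b t = Sum.inr j} = ↑E := by
    ext b
    simp [hE]
  rw [hset, Set.ncard_coe_finset]
  have hδR : pullDiag α ∈ S.R 1 := S.pullDiag_mem 0 α hα
  have hδval : ∀ c : Fin 1 → chB D, pullDiag α c
      = ∑ b : Fin 2 → chB D, α b * mulB D (b 0) (b 1) (c 0) := by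
    intro c
    unfold pullDiag
    refine Finset.sum_congr rfl fun b _ => ?_
    rw [if_pos (fun t => t.elim0), mul_one]
  have hzero : ∀ j : Fin (D / 2 + 1),
      (∑ b : Fin 2 → chB D, α b * mulB D (b 0) (b 1) (Sum.inr j)) = 0 := by
    intro j
    have hj : (j : ℕ) ≤ D / 2 := Nat.lt_succ_iff.mp j.isLt
    have h := coeff_l_eq_zero S hδR (j : ℕ) hj
    rw [hδval] at h
    have e : lB D (j : ℕ) = Sum.inr j := by
      rw [lB_val _ hj]
    rw [← e]
    exact h
  have hsum : ∑ b : Fin 2 → chB D,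
      α b * ∑ j : Fin (D / 2 + 1), mulB D (b 0) (b 1) (Sum.inr j) = 0 := by
    have h : ∑ j : Fin (D / 2 + 1), ∑ b : Fin 2 → chB D,
        α b * mulB D (b 0) (b 1) (Sum.inr j) = 0 := by
      rw [Finset.sum_eq_zero fun j _ => hzero j]
    rw [Finset.sum_comm] at h
    simpa [Finset.mul_sum] using h
  have hcard : ((E.card : ℕ) : ZMod 2) = 0 := by
    rw [← hsum]
    rw [← Finset.sum_subset (Finset.subset_univ E)]
    · rw [Finset.card_eq_sum_ones E, Nat.cast_sum]
      refine Finset.sum_congr rfl fun b hb => ?_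
      rw [hE, Finset.mem_filter] at hb
      obtain ⟨-, hαb, t, j, hbt⟩ := hb
      have hαb1 : α b = 1 := zmod2_ne_zero hαb
      have hco := hcodim b hαb
      have hM : ∑ j' : Fin (D / 2 + 1), mulB D (b 0) (b 1) (Sum.inr j') = 1 := by
        rcases hb0 : b 0 with i | j0 <;> rcases hb1 : b 1 with i' | j1
        · exfalso
          rcases (by omega : (t : ℕ) = 0 ∨ (t : ℕ) = 1) with ht | ht
          · rw [show t = 0 from Fin.ext ht, hb0] at hbt
            exact absurd hbt (by simp)
          · rw [show t = 1 from Fin.ext ht, hb1] at hbt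
            exact absurd hbt (by simp)
        · rw [hb0, hb1] at hco
          simp only [dimB] at hco
          have hii : (i : ℕ) ≤ D / 2 := Nat.lt_succ_iff.mp i.isLt
          have hjj : (j1 : ℕ) ≤ D / 2 := Nat.lt_succ_iff.mp j1.isLt
          have hle : (i : ℕ) ≤ (j1 : ℕ) := by omega
          have hterm : ∀ j' : Fin (D / 2 + 1), mulB D (Sum.inl i) (Sum.inr j1) (Sum.inr j')
              = if j' = (⟨(j1 : ℕ) - (i : ℕ), by omega⟩ : Fin (D / 2 + 1)) then 1 else 0 := by
            intro j'
            simp only [mulB]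
            rw [if_pos hle, lB_val _ (by omega)]
            simp [Sum.inr.injEq]
          rw [Finset.sum_congr rfl fun j' _ => hterm j']
          simp
        · rw [hb0, hb1] at hco
          simp only [dimB] at hco
          have hii : (i' : ℕ) ≤ D / 2 := Nat.lt_succ_iff.mp i'.isLt
          have hjj : (j0 : ℕ) ≤ D / 2 := Nat.lt_succ_iff.mp j0.isLt
          have hle : (i' : ℕ) ≤ (j0 : ℕ) := by omega
          have hterm : ∀ j' : Fin (D / 2 + 1), mulB D (Sum.inr j0) (Sum.inl i') (Sum.inr j')
              = if j' = (⟨(j0 : ℕ) - (i' : ℕ), by omega⟩ : Fin (D / 2 + 1)) then 1 else 0 := by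
            intro j'
            simp only [mulB]
            rw [if_pos hle, lB_val _ (by omega)]
            simp [Sum.inr.injEq]
          rw [Finset.sum_congr rfl fun j' _ => hterm j']
          simp
        · exfalso
          rw [hb0, hb1] at hco
          simp only [dimB] at hco
          have hii : (j0 : ℕ) ≤ D / 2 := Nat.lt_succ_iff.mp j0.isLt
          have hjj : (j1 : ℕ) ≤ D / 2 := Nat.lt_succ_iff.mp j1.isLt
          have hb' : b = fun _ => lB D (D / 2) := by
            have h0' : b 0 = lB D (D / 2) := by
              rw [hb0, lB_val (D / 2) le_rfl]
              exact congrArg Sum.inr (Fin.ext (show (j0 : ℕ) = D / 2 by omega))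
            have h1' : b 1 = lB D (D / 2) := by
              rw [hb1, lB_val (D / 2) le_rfl]
              exact congrArg Sum.inr (Fin.ext (show (j1 : ℕ) = D / 2 by omega))
            funext u
            refine Fin.cases h0' (fun u' => ?_) u
            rw [Subsingleton.elim u' 0]
            exact h1'
          rw [hb'] at hαb
          exact hαb (alpha_ld_ld S hα)
      rw [hαb1, hM, mul_one, Nat.cast_one]
    · intro b _ hbE
      rw [hE, Finset.mem_filter] at hbE
      push_neg at hbE
      by_cases hαb : α b = 0
      · rw [hαb, zero_mul]
      · have hness := hbE (Finset.mem_univ b) hαb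
        rcases hb0 : b 0 with i | j0
        · rcases hb1 : b 1 with i' | j1
          · have : ∑ j' : Fin (D / 2 + 1), mulB D (Sum.inl i) (Sum.inl i') (Sum.inr j') = 0 := by
              refine Finset.sum_eq_zero fun j' _ => ?_
              simp [mulB]
            rw [this, mul_zero]
          · exact absurd (hness 1 j1) (by rw [hb1]; exact fun h => h rfl)
        · exact absurd (hness 0 j0) (by rw [hb0]; exact fun h => h rfl)
  have : (2 : ℕ) ∣ E.card := (ZMod.natCast_eq_zero_iff E.card 2).mp hcard
  exact even_iff_two_dvd.mpr this
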